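/- Let F: ℝ → ℝ be continuous, nonnegative, and locally Lipschitz, with F(y) > 0 for y ≥ L₁ > 0, and suppose T − ∫_{L₁}^{∞} dy/F(y) < 0. Then the ODE s(t) = L₁ + ∫_t^T F(s(r)) dr has a solution s: [0,T] → ℝ with s(T) = L₁, s nonincreasing in a suitable sense (s(t) ≥ L₁ for all t), and s(t) is finite on all of [0,T]. -/

import Mathlib

/-!
Separation of variables. `G y = ∫_{L₁}^y du / F u` is continuous and strictly increasing on
`[L₁, ∞)` and tends to `∫_{L₁}^∞ du / F u > T`, so `G M = T` for some `M ≥ L₁`. Then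
`s t = G⁻¹ (T - t)` takes values in `[L₁, M]`, satisfies `s T = L₁` and, by the inverse
function rule, `s' = -F (s)`; integrating from `t` to `T` gives the integral equation.
-/

open MeasureTheory Set Filter Topology Function intervalIntegral

theorem StrictMonoOn.exists_continuous_rightInvOn {f : ℝ → ℝ} {a b : ℝ} (hab : a ≤ b)
    (hf : ContinuousOn f (Icc a b)) (hmono : StrictMonoOn f (Icc a b)) :
    ∃ g : ℝ → ℝ, Continuous g ∧ MapsTo g (Icc (f a) (f b)) (Icc a b) ∧
      RightInvOn g f (Icc (f a) (f b)) := by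
  have hsurj : SurjOn f (Icc a b) (Icc (f a) (f b)) :=
    hf.surjOn_Icc (left_mem_Icc.2 hab) (right_mem_Icc.2 hab)
  have hmaps := hsurj.mapsTo_invFunOn
  have hright := hsurj.rightInvOn_invFunOn
  have hleft := hmono.injOn.leftInvOn_invFunOn
  have hfab : f a ≤ f b := hmono.monotoneOn (left_mem_Icc.2 hab) (right_mem_Icc.2 hab) hab
  let ψ : Icc (f a) (f b) → Icc a b := fun y => ⟨invFunOn f (Icc a b) y, hmaps y.2⟩
  have hψ : Continuous ψ := by
    refine Monotone.continuous_of_surjective (fun y z hyz => ?_) fun x => ?_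
    · exact Subtype.mk_le_mk.2 <|
        monotoneOn_of_rightInvOn_of_mapsTo hmono.monotoneOn hright hmaps y.2 z.2 hyz
    · exact ⟨⟨f x, hmono.monotoneOn (left_mem_Icc.2 hab) x.2 x.2.1,
        hmono.monotoneOn x.2 (right_mem_Icc.2 hab) x.2.2⟩, Subtype.ext (hleft x.2)⟩
  refine ⟨fun y => (IccExtend hfab ψ y).1, continuous_subtype_val.comp hψ.Icc_extend',
    fun y _ => (IccExtend hfab ψ y).2, fun y hy => ?_⟩
  show f (IccExtend hfab ψ y).1 = y
  rw [IccExtend_of_mem hfab ψ hy]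
  exact hright hy

theorem exists_intervalIntegral_eq_of_lt_integral_Ici {f : ℝ → ℝ} {L T : ℝ}
    (hf : IntegrableOn f (Ici L)) (hT₀ : 0 ≤ T) (hT : T < ∫ y in Ici L, f y) :
    ∃ M, L ≤ M ∧ ∫ y in L..M, f y = T := by
  have htendsto : Tendsto (fun M => ∫ y in L..M, f y) atTop (𝓝 (∫ y in Ici L, f y)) := by
    rw [integral_Ici_eq_integral_Ioi]
    exact intervalIntegral_tendsto_integral_Ioi L (hf.mono_set Ioi_subset_Ici_self) tendsto_id
  obtain ⟨M₀, hTM₀, hLM₀⟩ :=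
    ((htendsto.eventually (eventually_gt_nhds hT)).and (eventually_ge_atTop L)).exists
  have hcont : ContinuousOn (fun M => ∫ y in L..M, f y) (Icc L M₀) := by
    rw [← uIcc_of_le hLM₀]
    exact continuousOn_primitive_interval (hf.mono_set (uIcc_of_le hLM₀ ▸ Icc_subset_Ici_self))
  obtain ⟨M, hM, hMT⟩ := intermediate_value_Icc hLM₀ hcont
    ⟨by simpa only [integral_same] using hT₀, hTM₀.le⟩
  exact ⟨M, hM.1, hMT⟩

section SeparationOfVariables

variable {F : ℝ → ℝ} {L : ℝ}

theorem hasDerivAt_integral_inv (hF : Continuous F) (hpos : ∀ y, L ≤ y → 0 < F y) {y : ℝ}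
    (hy : L ≤ y) : HasDerivAt (fun z => ∫ u in L..z, (F u)⁻¹) (F y)⁻¹ y := by
  have hcont : ContinuousOn (fun u => (F u)⁻¹) (uIcc L y) := by
    rw [uIcc_of_le hy]
    exact hF.continuousOn.inv₀ fun u hu => (hpos u hu.1).ne'
  exact integral_hasDerivAt_right hcont.intervalIntegrable
    hF.measurable.inv.stronglyMeasurable.stronglyMeasurableAtFilter
    (hF.continuousAt.inv₀ (hpos y hy).ne')

theorem strictMonoOn_integral_inv (hF : Continuous F) (hpos : ∀ y, L ≤ y → 0 < F y) :
    StrictMonoOn (fun z => ∫ u in L..z, (F u)⁻¹) (Ici L) := by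
  refine strictMonoOn_of_deriv_pos (convex_Ici L) (fun y hy => ?_) fun y hy => ?_
  · exact (hasDerivAt_integral_inv hF hpos hy).continuousAt.continuousWithinAt
  · rw [interior_Ici] at hy
    rw [(hasDerivAt_integral_inv hF hpos (le_of_lt hy)).deriv]
    exact inv_pos.2 (hpos y (le_of_lt hy))

theorem hasDerivAt_of_integral_inv_comp_eq (hF : Continuous F) (hpos : ∀ y, L ≤ y → 0 < F y)
    {s : ℝ → ℝ} {c r : ℝ} (hs : ContinuousAt s r) (hsr : L ≤ s r)
    (heq : ∀ᶠ t in 𝓝 r, ∫ u in L..s t, (F u)⁻¹ = c - t) : HasDerivAt s (-F (s r)) r := by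
  have hderiv : HasDerivAt (fun y => c - ∫ u in L..y, (F u)⁻¹) (-(F (s r))⁻¹) (s r) := by
    simpa only [zero_sub] using (hasDerivAt_integral_inv hF hpos hsr).const_sub c
  have hinv := hderiv.of_local_left_inverse hs
    (neg_ne_zero.2 (inv_ne_zero (hpos _ hsr).ne'))
    (heq.mono fun t ht => by simp only [ht, sub_sub_cancel])
  rwa [inv_neg, inv_inv] at hinv

end SeparationOfVariables

theorem eq_add_integral_of_hasDerivAt_neg {s φ : ℝ → ℝ} {t T : ℝ} (htT : t ≤ T)
    (hs : ContinuousOn s (Icc t T)) (hφ : ContinuousOn φ (Icc t T))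
    (hderiv : ∀ x ∈ Ioo t T, HasDerivAt s (-φ x) x) : s t = s T + ∫ r in Ioc t T, φ r := by
  have hftc := integral_eq_sub_of_hasDerivAt_of_le htT hs hderiv
    (hφ.neg.intervalIntegrable_of_Icc htT)
  rw [intervalIntegral.integral_neg, integral_of_le htT] at hftc
  linarith

theorem stmt8_general (F : ℝ → ℝ) (L₁ T : ℝ) (hT : 0 < T)
    (hF : Continuous F)
    (hpos : ∀ y : ℝ, L₁ ≤ y → 0 < F y)
    (hint : IntegrableOn (fun y => (F y)⁻¹) (Set.Ici L₁))
    (hblow : T - ∫ y in Set.Ici L₁, (F y)⁻¹ < 0) :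
    ∃ s : ℝ → ℝ, ContinuousOn s (Set.Icc 0 T) ∧ s T = L₁ ∧
      (∀ t ∈ Set.Icc 0 T, L₁ ≤ s t) ∧
      (∀ t ∈ Set.Icc 0 T, s t = L₁ + ∫ r in Set.Ioc t T, F (s r)) := by
  have hG_mono : StrictMonoOn (fun z => ∫ u in L₁..z, (F u)⁻¹) (Ici L₁) :=
    strictMonoOn_integral_inv hF hpos
  obtain ⟨M, hLM, hGM⟩ := exists_intervalIntegral_eq_of_lt_integral_Ici hint hT.le (by linarith)
  obtain ⟨g, hg_cont, hg_maps, hg_inv⟩ :=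
    (hG_mono.mono Icc_subset_Ici_self).exists_continuous_rightInvOn hLM fun y hy =>
      (hasDerivAt_integral_inv hF hpos hy.1).continuousAt.continuousWithinAt
  rw [integral_same, hGM] at hg_maps hg_inv
  set s : ℝ → ℝ := fun t => g (T - t)
  have hs_cont : Continuous s := hg_cont.comp (continuous_sub_left T)
  have hT_sub : ∀ t ∈ Icc 0 T, T - t ∈ Icc 0 T := fun t ht =>
    ⟨by linarith [ht.2], by linarith [ht.1]⟩
  have hs_mem : ∀ t ∈ Icc 0 T, s t ∈ Icc L₁ M := fun t ht => hg_maps (hT_sub t ht)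
  have hs_inv : ∀ t ∈ Icc 0 T, ∫ u in L₁..s t, (F u)⁻¹ = T - t := fun t ht =>
    hg_inv (hT_sub t ht)
  have hsT : s T = L₁ := hG_mono.injOn (hs_mem T (right_mem_Icc.2 hT.le)).1 self_mem_Ici <| by
    rw [hs_inv T (right_mem_Icc.2 hT.le), sub_self, integral_same]
  have hs_deriv : ∀ r ∈ Ioo 0 T, HasDerivAt s (-F (s r)) r := fun r hr =>
    hasDerivAt_of_integral_inv_comp_eq hF hpos hs_cont.continuousAt
      (hs_mem r (Ioo_subset_Icc_self hr)).1 (eventually_of_mem (Icc_mem_nhds hr.1 hr.2) hs_inv)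
  refine ⟨s, hs_cont.continuousOn, hsT, fun t ht => (hs_mem t ht).1, fun t ht => ?_⟩
  rw [← hsT]
  exact eq_add_integral_of_hasDerivAt_neg ht.2 hs_cont.continuousOn
    (hF.comp hs_cont).continuousOn fun x hx => hs_deriv x ⟨ht.1.trans_lt hx.1, hx.2⟩

/-- The backward ODE s(t) = L₁ + ∫_t^T F(s(r))dr has a finite solution on [0,T]
with s ≥ L₁ when the blow-up time T − ∫_{L₁}^∞ dy/F(y) is negative. -/
theorem stmt8 (F : ℝ → ℝ) (L₁ T : ℝ) (hL₁ : 0 < L₁) (hT : 0 < T)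
    (hF : Continuous F) (hFnn : ∀ y : ℝ, 0 ≤ F y)
    (hlip : LocallyLipschitz F)
    (hpos : ∀ y : ℝ, L₁ ≤ y → 0 < F y)
    (hint : IntegrableOn (fun y => (F y)⁻¹) (Set.Ici L₁))
    (hblow : T - ∫ y in Set.Ici L₁, (F y)⁻¹ < 0) :
    ∃ s : ℝ → ℝ, ContinuousOn s (Set.Icc 0 T) ∧ s T = L₁ ∧
      (∀ t ∈ Set.Icc 0 T, L₁ ≤ s t) ∧
      (∀ t ∈ Set.Icc 0 T, s t = L₁ + ∫ r in Set.Ioc t T, F (s r)) :=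
  stmt8_general F L₁ T hT hF hpos hint hblow
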